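/- arXiv:1505.07200 — 3 statements merged into one kernel-verified Lean document; each statement's English description precedes it below -/
import Mathlib

section
/- Let P be a non-negative self-adjoint operator on a Hilbert space and B a symmetric operator which is relatively bounded with respect to P with relative bound a < 1, and B ≥ 0. Then for the operator H = P − iB with domain Dom(P): for any c > 0 there exist constants such that for all n ∈ ℕ and z with Im z > 0 and Re(z) ≤ −c < 0, ‖(H−z)^{-(n+1)}‖ ≤ C/|Re(z)|^{n+1}. -/
open Complex

/-- `R` is a two-sided bounded inverse of `H - z`. -/
def IsResolventAt {𝓗 : Type*} [NormedAddCommGroup 𝓗] [InnerProductSpace ℂ 𝓗]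
    (D : Submodule ℂ 𝓗) (H : D →ₗ[ℂ] 𝓗) (z : ℂ) (R : 𝓗 →L[ℂ] 𝓗) : Prop :=
  (∀ φ : D, R (H φ - z • (φ : 𝓗)) = φ) ∧
  (∀ u : 𝓗, ∃ φ : D, (φ : 𝓗) = R u ∧ H φ - z • (φ : 𝓗) = u)

/-!
Since `B` is symmetric, `⟪-i B φ, φ⟫` is purely imaginary, so `H = P - i B` is accretive:
`Re ⟪H φ, φ⟫ = ⟪P φ, φ⟫ ≥ 0`. For `Re z < 0` this gives
`|Re z| ‖φ‖² ≤ Re ⟪(H - z) φ, φ⟫ ≤ ‖(H - z) φ‖ ‖φ‖`, hence `‖(H - z)⁻¹‖ ≤ 1 / |Re z|`,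
and the bound on the powers follows from submultiplicativity of the operator norm.
-/

section Accretive

variable {E : Type*} [NormedAddCommGroup E] [InnerProductSpace ℂ E]

lemma neg_re_mul_norm_le_norm_sub_smul {x y : E} (hxy : 0 ≤ (inner ℂ y x).re) (z : ℂ) :
    -z.re * ‖x‖ ≤ ‖y - z • x‖ := by
  rcases (norm_nonneg x).eq_or_lt with hx | hx
  · rw [← hx, mul_zero]
    exact norm_nonneg _
  have hre : (inner ℂ (y - z • x) x).re = (inner ℂ y x).re - z.re * ‖x‖ ^ 2 := by
    have him : (inner ℂ x x).im = 0 := inner_self_im (𝕜 := ℂ) x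
    have hnorm : (inner ℂ x x).re = ‖x‖ ^ 2 := inner_self_eq_norm_sq (𝕜 := ℂ) x
    rw [inner_sub_left, inner_smul_left, sub_re, mul_re, conj_re, conj_im, him, hnorm]
    ring
  have hupper : (inner ℂ (y - z • x) x).re ≤ ‖y - z • x‖ * ‖x‖ :=
    (re_le_norm _).trans (norm_inner_le_norm _ _)
  nlinarith

lemma IsResolventAt.norm_le {D : Submodule ℂ E} {H : D →ₗ[ℂ] E} {z : ℂ} {R : E →L[ℂ] E}
    (hR : IsResolventAt D H z R) (hH : ∀ φ : D, 0 ≤ (inner ℂ (H φ) (φ : E)).re)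
    (hz : z.re < 0) : ‖R‖ ≤ (-z.re)⁻¹ := by
  refine ContinuousLinearMap.opNorm_le_bound _ (by simp [hz.le]) fun u => ?_
  obtain ⟨φ, hφ, rfl⟩ := hR.2 u
  rw [← hφ, inv_mul_eq_div, le_div_iff₀ (neg_pos.mpr hz), mul_comm]
  exact neg_re_mul_norm_le_norm_sub_smul (hH φ) z

lemma re_inner_sub_I_smul_apply_self {D : Submodule ℂ E} (P B : D →ₗ[ℂ] E)
    (hB : ∀ φ ψ : D, inner ℂ (B φ) (ψ : E) = inner ℂ (φ : E) (B ψ)) (φ : D) :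
    (inner ℂ ((P - I • B) φ) (φ : E)).re = (inner ℂ (P φ) (φ : E)).re := by
  have hreal : (inner ℂ (B φ) (φ : E)).im = 0 :=
    conj_eq_iff_im.mp (by rw [inner_conj_symm, hB])
  simp [hreal]

end Accretive

theorem stmt3_general {𝓗 : Type*} [NormedAddCommGroup 𝓗] [InnerProductSpace ℂ 𝓗]
    (D : Submodule ℂ 𝓗)
    (P B : D →ₗ[ℂ] 𝓗)
    (hPpos : ∀ φ : D, 0 ≤ (inner ℂ (P φ) (φ : 𝓗) : ℂ).re)
    (hBsym : ∀ φ ψ : D, (inner ℂ (B φ) (ψ : 𝓗) : ℂ) = inner ℂ (φ : 𝓗) (B ψ)) :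
    ∀ c : ℝ, 0 < c → ∃ C : ℝ, ∀ (n : ℕ) (z : ℂ) (R : 𝓗 →L[ℂ] 𝓗),
      0 < z.im → z.re ≤ -c →
      IsResolventAt D (P - Complex.I • B) z R →
      ‖R ^ (n + 1)‖ ≤ C / |z.re| ^ (n + 1) := by
  intro c hc
  refine ⟨1, fun n z R _ hzc hR => ?_⟩
  have hz : z.re < 0 := by linarith
  have hRnorm : ‖R‖ ≤ |z.re|⁻¹ := by
    rw [abs_of_neg hz]
    exact hR.norm_le (fun φ => (re_inner_sub_I_smul_apply_self P B hBsym φ).symm ▸ hPpos φ) hz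
  calc ‖R ^ (n + 1)‖ ≤ ‖R‖ ^ (n + 1) := norm_pow_le' R n.succ_pos
    _ ≤ (|z.re|⁻¹) ^ (n + 1) := pow_le_pow_left₀ (norm_nonneg R) hRnorm _
    _ = 1 / |z.re| ^ (n + 1) := by rw [inv_pow, one_div]

/-- Let `P` be non-negative self-adjoint (symmetric, non-negative, with
`±i` in its resolvent set), and `B` symmetric, non-negative and `P`-bounded with relative
bound `a < 1`. For `H = P - iB` (domain `Dom P`): for every `c > 0` there is `C` such that
for all `n ∈ ℕ` and `z` with `Im z > 0` and `Re z ≤ -c`, `‖(H - z)⁻¹ ^ (n+1)‖ ≤ C / |Re z|^(n+1)`. -/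
theorem stmt3 {𝓗 : Type*} [NormedAddCommGroup 𝓗] [InnerProductSpace ℂ 𝓗] [CompleteSpace 𝓗]
    (D : Submodule ℂ 𝓗) (hdense : Dense (D : Set 𝓗))
    (P B : D →ₗ[ℂ] 𝓗)
    (hPsym : ∀ φ ψ : D, (inner ℂ (P φ) (ψ : 𝓗) : ℂ) = inner ℂ (φ : 𝓗) (P ψ))
    (hPpos : ∀ φ : D, 0 ≤ (inner ℂ (P φ) (φ : 𝓗) : ℂ).re)
    (hPsa₁ : ∃ R : 𝓗 →L[ℂ] 𝓗, IsResolventAt D P Complex.I R)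
    (hPsa₂ : ∃ R : 𝓗 →L[ℂ] 𝓗, IsResolventAt D P (-Complex.I) R)
    (hBsym : ∀ φ ψ : D, (inner ℂ (B φ) (ψ : 𝓗) : ℂ) = inner ℂ (φ : 𝓗) (B ψ))
    (hBpos : ∀ φ : D, 0 ≤ (inner ℂ (B φ) (φ : 𝓗) : ℂ).re)
    (hrel : ∃ a b : ℝ, 0 ≤ a ∧ a < 1 ∧ ∀ φ : D, ‖B φ‖ ≤ a * ‖P φ‖ + b * ‖φ‖) :
    ∀ c : ℝ, 0 < c → ∃ C : ℝ, ∀ (n : ℕ) (z : ℂ) (R : 𝓗 →L[ℂ] 𝓗),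
      0 < z.im → z.re ≤ -c →
      IsResolventAt D (P - Complex.I • B) z R →
      ‖R ^ (n + 1)‖ ≤ C / |z.re| ^ (n + 1) :=
  stmt3_general D P B hPpos hBsym
end

section
/- Let \mathcal{H} be a Hilbert space and \mathcal{R}_0, \mathcal{R}_1, \mathcal{B} ∈ \mathcal{L}(\mathcal{H}) satisfy \mathcal{R}_1 = \mathcal{R}_0 − \mathcal{R}_0 \mathcal{B} \mathcal{R}_1 = \mathcal{R}_0 − \mathcal{R}_1 \mathcal{B} \mathcal{R}_0. Then for all m ∈ ℕ, \mathcal{R}_1^{m+1} can be written as a linear combination (with integer coefficients) of terms of the form \mathcal{R}_0^{m_1+1} \mathcal{B} \mathcal{R}_{j_2}^{m_2+1} \mathcal{B} ⋯ \mathcal{B} \mathcal{R}_{j_{k-1}}^{m_{k-1}+1} \mathcal{B} \mathcal{R}_0^{m_k+1}, where k ∈ ℕ*, j_2,…,j_{k−1} ∈ {0,1}, m_1,…,m_k ∈ ℕ, Σ_{l=1}^k m_l ≤ m, and m_l = 0 whenever j_l = 1. -/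
open Complex

/-- The product `R_{j₁}^{m₁+1} 𝓑 R_{j₂}^{m₂+1} 𝓑 ⋯ 𝓑 R_{j_k}^{m_k+1}` associated to a
word `[(j₁,m₁),…,(j_k,m_k)]`, where `R_false = 𝓡₀` and `R_true = 𝓡₁`. -/
noncomputable def resolventWord {𝓗 : Type*} [NormedAddCommGroup 𝓗] [InnerProductSpace ℂ 𝓗]
    (R0 R1 B : 𝓗 →L[ℂ] 𝓗) : List (Bool × ℕ) → (𝓗 →L[ℂ] 𝓗)
  | [] => 1
  | [(j, m)] => (if j then R1 else R0) ^ (m + 1)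
  | (j, m) :: rest => (if j then R1 else R0) ^ (m + 1) * B * resolventWord R0 R1 B rest

section Aux

variable {𝓗 : Type*} [NormedAddCommGroup 𝓗] [InnerProductSpace ℂ 𝓗]
  (R0 R1 B : 𝓗 →L[ℂ] 𝓗)

/-- The set of admissible words at level `m`. -/
def wordSet (m : ℕ) : Set (𝓗 →L[ℂ] 𝓗) :=
  {T : 𝓗 →L[ℂ] 𝓗 | ∃ (L : List (Bool × ℕ)) (hL : L ≠ []),
      (L.head hL).1 = false ∧ (L.getLast hL).1 = false ∧
      (L.map Prod.snd).sum ≤ m ∧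
      (∀ p ∈ L, p.1 = true → p.2 = 0) ∧
      T = resolventWord R0 R1 B L}

lemma rw_cons (j : Bool) (m : ℕ) (p : Bool × ℕ) (rest : List (Bool × ℕ)) :
    resolventWord R0 R1 B ((j, m) :: p :: rest)
      = (if j then R1 else R0) ^ (m + 1) * B * resolventWord R0 R1 B (p :: rest) := rfl

lemma rw_cons0 (j : Bool) (p : Bool × ℕ) (rest : List (Bool × ℕ)) :
    resolventWord R0 R1 B ((j, 0) :: p :: rest)
      = (if j then R1 else R0) * B * resolventWord R0 R1 B (p :: rest) := by
  rw [rw_cons, pow_one]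

lemma rw_shift (m1 : ℕ) (tail : List (Bool × ℕ)) :
    resolventWord R0 R1 B ((false, m1 + 1) :: tail)
      = R0 * resolventWord R0 R1 B ((false, m1) :: tail) := by
  cases tail with
  | nil => simp [resolventWord, pow_succ']
  | cons p rest =>
      rw [rw_cons, rw_cons]
      simp only [Bool.false_eq_true, if_false]
      rw [pow_succ']
      noncomm_ring

lemma master (h2 : R1 = R0 - R1 * B * R0)
    (h3 : R1 = R0 - R0 * B * R0 + R0 * B * R1 * B * R0) (P : 𝓗 →L[ℂ] 𝓗) :
    R1 * P = R0 * P - R0 * B * (R0 * P) + R0 * B * (R0 * B * (R0 * P))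
      - R0 * B * (R1 * B * (R0 * B * (R0 * P))) := by
  have e1 : R1 * P = R0 * P - R1 * (B * (R0 * P)) := by
    conv_lhs => rw [h2]
    noncomm_ring
  have e2 : R1 * (B * (R0 * P))
      = R0 * B * (R0 * P) - R0 * B * (R0 * B * (R0 * P))
        + R0 * B * (R1 * B * (R0 * B * (R0 * P))) := by
    conv_lhs => rw [h3]
    noncomm_ring
  rw [e1, e2]
  noncomm_ring

lemma word_step (h2 : R1 = R0 - R1 * B * R0)
    (h3 : R1 = R0 - R0 * B * R0 + R0 * B * R1 * B * R0) (m : ℕ) :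
    ∀ T ∈ wordSet R0 R1 B m, R1 * T ∈ Submodule.span ℤ (wordSet R0 R1 B (m + 1)) := by
  rintro T ⟨L, hL, hhead, hlast, hsum, htrue, rfl⟩
  cases L with
  | nil => exact absurd rfl hL
  | cons p tail =>
    obtain ⟨j1, m1⟩ := p
    simp only [List.head_cons] at hhead
    subst hhead
    -- the shifted word
    have hXW := rw_shift R0 R1 B m1 tail
    have w1 : resolventWord R0 R1 B ((false, 0) :: (false, m1 + 1) :: tail)
        = R0 * B * resolventWord R0 R1 B ((false, m1 + 1) :: tail) := by
      rw [rw_cons0]; simp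
    have w2 : resolventWord R0 R1 B ((false, 0) :: (false, 0) :: (false, m1 + 1) :: tail)
        = R0 * B * (R0 * B * resolventWord R0 R1 B ((false, m1 + 1) :: tail)) := by
      rw [rw_cons0, w1]; simp
    have w3 : resolventWord R0 R1 B ((true, 0) :: (false, 0) :: (false, m1 + 1) :: tail)
        = R1 * B * (R0 * B * resolventWord R0 R1 B ((false, m1 + 1) :: tail)) := by
      rw [rw_cons0, w1]; simp
    have w4 : resolventWord R0 R1 B
          ((false, 0) :: (true, 0) :: (false, 0) :: (false, m1 + 1) :: tail)
        = R0 * B * (R1 * B * (R0 * B * resolventWord R0 R1 B ((false, m1 + 1) :: tail))) := by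
      rw [rw_cons0, w3]; simp
    have eq4 : R1 * resolventWord R0 R1 B ((false, m1) :: tail)
        = resolventWord R0 R1 B ((false, m1 + 1) :: tail)
          - resolventWord R0 R1 B ((false, 0) :: (false, m1 + 1) :: tail)
          + resolventWord R0 R1 B ((false, 0) :: (false, 0) :: (false, m1 + 1) :: tail)
          - resolventWord R0 R1 B
              ((false, 0) :: (true, 0) :: (false, 0) :: (false, m1 + 1) :: tail) := by
      rw [w1, w2, w4, hXW, master R0 R1 B h2 h3]
    rw [eq4]
    -- getLast of the shifted word is still `false`
    have hlastM : (((false, m1 + 1) :: tail).getLast (List.cons_ne_nil _ _)).1 = false := by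
      cases tail with
      | nil => simp
      | cons r rs =>
          rw [List.getLast_cons (List.cons_ne_nil _ _)]
          rw [List.getLast_cons (List.cons_ne_nil _ _)] at hlast
          exact hlast
    have hsumM : ((((false, m1 + 1) :: tail)).map Prod.snd).sum ≤ m + 1 := by
      simp only [List.map_cons, List.sum_cons] at hsum ⊢
      omega
    have htrueM : ∀ q ∈ (false, m1 + 1) :: tail, q.1 = true → q.2 = 0 := by
      intro q hq hq1
      rcases List.mem_cons.mp hq with h | h
      · subst h; simp at hq1
      · exact htrue q (List.mem_cons_of_mem _ h) hq1
    refine Submodule.sub_mem _ (Submodule.add_mem _ (Submodule.sub_mem _ ?_ ?_) ?_) ?_ <;>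
      apply Submodule.subset_span
    · exact ⟨(false, m1 + 1) :: tail, List.cons_ne_nil _ _, rfl, hlastM, hsumM, htrueM, rfl⟩
    · refine ⟨(false, 0) :: (false, m1 + 1) :: tail, List.cons_ne_nil _ _, rfl, ?_, ?_, ?_, rfl⟩
      · rw [List.getLast_cons (List.cons_ne_nil _ _)]; exact hlastM
      · simpa using hsumM
      · intro q hq hq1
        rcases List.mem_cons.mp hq with h | h
        · subst h; simp at hq1
        · exact htrueM q h hq1
    · refine ⟨(false, 0) :: (false, 0) :: (false, m1 + 1) :: tail, List.cons_ne_nil _ _,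
        rfl, ?_, ?_, ?_, rfl⟩
      · rw [List.getLast_cons (List.cons_ne_nil _ _), List.getLast_cons (List.cons_ne_nil _ _)]
        exact hlastM
      · simpa using hsumM
      · intro q hq hq1
        rcases List.mem_cons.mp hq with h | h
        · subst h; simp at hq1
        · rcases List.mem_cons.mp h with h' | h'
          · subst h'; simp at hq1
          · exact htrueM q h' hq1
    · refine ⟨(false, 0) :: (true, 0) :: (false, 0) :: (false, m1 + 1) :: tail,
        List.cons_ne_nil _ _, rfl, ?_, ?_, ?_, rfl⟩
      · rw [List.getLast_cons (List.cons_ne_nil _ _), List.getLast_cons (List.cons_ne_nil _ _),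
          List.getLast_cons (List.cons_ne_nil _ _)]
        exact hlastM
      · simpa using hsumM
      · intro q hq hq1
        rcases List.mem_cons.mp hq with h | h
        · subst h; simp at hq1
        · rcases List.mem_cons.mp h with h' | h'
          · subst h'; rfl
          · rcases List.mem_cons.mp h' with h'' | h''
            · subst h''; simp at hq1
            · exact htrueM q h'' hq1

lemma stmt8_aux (h1 : R1 = R0 - R0 * B * R1) (h2 : R1 = R0 - R1 * B * R0) :
    ∀ m : ℕ, R1 ^ (m + 1) ∈ Submodule.span ℤ (wordSet R0 R1 B m) := by
  have h3 : R1 = R0 - R0 * B * R0 + R0 * B * R1 * B * R0 := by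
    conv_lhs => rw [h1]
    conv_lhs => rw [h2]
    noncomm_ring
  intro m
  induction m with
  | zero =>
      have e : R1 ^ 1 = resolventWord R0 R1 B [(false, 0)]
          - resolventWord R0 R1 B [(false, 0), (false, 0)]
          + resolventWord R0 R1 B [(false, 0), (true, 0), (false, 0)] := by
        simp only [resolventWord, rw_cons0, Bool.false_eq_true, if_false, if_true, pow_one]
        conv_lhs => rw [h3]
        noncomm_ring
      rw [e]
      refine Submodule.add_mem _ (Submodule.sub_mem _ ?_ ?_) ?_ <;>
        apply Submodule.subset_span
      · exact ⟨[(false, 0)], by simp, rfl, rfl, by simp, by simp, rfl⟩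
      · exact ⟨[(false, 0), (false, 0)], by simp, rfl, rfl, by simp, by simp, rfl⟩
      · refine ⟨[(false, 0), (true, 0), (false, 0)], by simp, rfl, rfl, by simp, ?_, rfl⟩
        intro p hp hp1
        simp only [List.mem_cons, List.not_mem_nil, or_false] at hp
        rcases hp with h | h | h <;> subst h <;> simp
  | succ m ih =>
      have pe : R1 ^ (m + 1 + 1) = R1 * R1 ^ (m + 1) := by rw [pow_succ']
      rw [pe]
      exact Submodule.span_induction
        (p := fun x _ => R1 * x ∈ Submodule.span ℤ (wordSet R0 R1 B (m + 1)))
        (fun x hx => word_step R0 R1 B h2 h3 m x hx)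
        (by simp)
        (fun x y _ _ hx hy => by show R1 * (x + y) ∈ _; rw [mul_add]; exact Submodule.add_mem _ hx hy)
        (fun a x _ hx => by show R1 * (a • x) ∈ _; rw [mul_smul_comm]; exact Submodule.smul_mem _ a hx)
        ih

end Aux

/-- If `𝓡₁ = 𝓡₀ - 𝓡₀𝓑𝓡₁ = 𝓡₀ - 𝓡₁𝓑𝓡₀`, then for all `m`, `𝓡₁^{m+1}` is an
integer-linear combination of products `𝓡₀^{m₁+1} 𝓑 𝓡_{j₂}^{m₂+1} 𝓑 ⋯ 𝓑 𝓡₀^{m_k+1}` with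
`Σ m_l ≤ m` and `m_l = 0` whenever `j_l = 1`. -/
theorem stmt8 {𝓗 : Type*} [NormedAddCommGroup 𝓗] [InnerProductSpace ℂ 𝓗] [CompleteSpace 𝓗]
    (R0 R1 B : 𝓗 →L[ℂ] 𝓗)
    (h1 : R1 = R0 - R0 * B * R1) (h2 : R1 = R0 - R1 * B * R0) :
    ∀ m : ℕ, R1 ^ (m + 1) ∈ Submodule.span ℤ
      {T : 𝓗 →L[ℂ] 𝓗 | ∃ (L : List (Bool × ℕ)) (hL : L ≠ []),
        (L.head hL).1 = false ∧ (L.getLast hL).1 = false ∧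
        (L.map Prod.snd).sum ≤ m ∧
        (∀ p ∈ L, p.1 = true → p.2 = 0) ∧
        T = resolventWord R0 R1 B L} := by
  intro m
  exact stmt8_aux R0 R1 B h1 h2 m
end

section
/- Let H be a maximal dissipative operator on a Hilbert space with resolvent R(z) for Im z > 0. Then for every m ∈ ℕ* and n ∈ ℕ, R^{n+1}(z) can be written as a finite sum of terms of the form (z−i)^β R^{n+1+β}(i) with β ∈ ℕ, or of the form (z−i)^{2m−n−1+ν} R^m(i) R^ν(z) R^m(i) with max(1, n+1−2m) ≤ ν ≤ n+1. -/
open Complex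

/-!
Both resolvent identities `R(z) = R(i) + (z - i) R(i) R(z) = R(i) + (z - i) R(z) R(i)` hold, so
`R(i)` and `R(z)` commute. Writing `A = R(i)`, `B = R(z)`, `w = z - i`, the identity
`A^a B^(b+1) = A^(a+1) B^b + w A^(a+1) B^(b+1)` moves one factor from `B` to `A` while keeping
`a + b - (power of w)` fixed. Starting from `B^(n+1)` and applying it `2m` times, every term either
has lost all its `B`'s, or carries `A^(2m) = A^m · A^m` next to at most `n + 1` factors `B`.
-/

section ResolventIdentity

variable {𝓗 : Type*} [NormedAddCommGroup 𝓗] [InnerProductSpace ℂ 𝓗]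
  {D : Submodule ℂ 𝓗} {H : D →ₗ[ℂ] 𝓗} {z w : ℂ} {Rz Rw : 𝓗 →L[ℂ] 𝓗}

theorem IsResolventAt.sub_eq_smul_mul (hz : IsResolventAt D H z Rz)
    (hw : IsResolventAt D H w Rw) : Rz - Rw = (z - w) • (Rw * Rz) := by
  ext u
  obtain ⟨φ, hφ, hHφ⟩ := hz.2 u
  have hshift : H φ - w • (φ : 𝓗) = u + (z - w) • (φ : 𝓗) := by
    rw [← hHφ, sub_smul]; abel
  have h := hw.1 φ
  rw [hshift, map_add, map_smul, hφ] at h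
  exact sub_eq_iff_eq_add'.mpr h.symm

theorem IsResolventAt.commute (hz : IsResolventAt D H z Rz) (hw : IsResolventAt D H w Rw) :
    Commute Rw Rz := by
  have h₁ := hz.sub_eq_smul_mul hw
  have h₂ : Rz - Rw = (z - w) • (Rz * Rw) := by
    rw [← neg_sub, hw.sub_eq_smul_mul hz, ← neg_sub z, neg_smul, neg_neg]
  by_cases hzw : z = w
  · rw [hzw, sub_self, zero_smul, sub_eq_zero] at h₁
    rw [h₁]
  · exact smul_right_injective _ (sub_ne_zero.mpr hzw) (h₁.symm.trans h₂)

end ResolventIdentity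

section Expansion

variable {𝕜 𝒜 : Type*} [CommSemiring 𝕜] [Semiring 𝒜] [Algebra 𝕜 𝒜] {A B : 𝒜} {w : 𝕜}

def resolventTerms (A B : 𝒜) (w : 𝕜) (m n : ℕ) : Set 𝒜 :=
  {T | (∃ β : ℕ, T = w ^ β • A ^ (n + 1 + β)) ∨
    (∃ ν : ℕ, max 1 (n + 1 - 2 * m) ≤ ν ∧ ν ≤ n + 1 ∧
      T = w ^ (2 * m + ν - (n + 1)) • (A ^ m * B ^ ν * A ^ m))}

theorem pow_mul_pow_succ_eq (hc : Commute A B) (hB : B = A + w • (A * B)) (a b : ℕ) :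
    A ^ a * B ^ (b + 1) = A ^ (a + 1) * B ^ b + w • (A ^ (a + 1) * B ^ (b + 1)) := by
  have hcomm : A ^ a * B ^ b * A = A ^ (a + 1) * B ^ b := by
    rw [mul_assoc, ← (hc.pow_right b).eq, ← mul_assoc, ← pow_succ]
  calc A ^ a * B ^ (b + 1) = A ^ a * B ^ b * (A + w • (A * B)) := by
        rw [← hB, pow_succ, mul_assoc]
    _ = A ^ (a + 1) * B ^ b + w • (A ^ (a + 1) * B ^ (b + 1)) := by
        rw [mul_add, mul_smul_comm, ← mul_assoc, hcomm, mul_assoc, ← pow_succ]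

variable {m n : ℕ}

theorem smul_pow_mem_closure_resolventTerms {a e : ℕ} (hae : a = n + 1 + e) :
    w ^ e • A ^ a ∈ AddSubmonoid.closure (resolventTerms A B w m n) :=
  AddSubmonoid.subset_closure (Or.inl ⟨e, by rw [hae]⟩)

theorem smul_pow_two_mul_mul_pow_mem_closure_resolventTerms (hc : Commute A B) {b e : ℕ}
    (hb : b ≤ n + 1) (hbe : 2 * m + b = n + 1 + e) :
    w ^ e • (A ^ (2 * m) * B ^ b) ∈ AddSubmonoid.closure (resolventTerms A B w m n) := by
  rcases b with _ | ν
  · rw [pow_zero, mul_one]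
    exact smul_pow_mem_closure_resolventTerms (by omega)
  · refine AddSubmonoid.subset_closure (Or.inr ⟨ν + 1, by omega, hb, ?_⟩)
    rw [show 2 * m + (ν + 1) - (n + 1) = e by omega, mul_assoc, ← (hc.pow_pow m (ν + 1)).eq,
      ← mul_assoc, ← pow_add, two_mul]

theorem smul_pow_mul_pow_mem_closure_resolventTerms (hc : Commute A B)
    (hB : B = A + w • (A * B)) (k : ℕ) :
    ∀ a b e : ℕ, a + k = 2 * m → a + b = n + 1 + e → b ≤ n + 1 →
      w ^ e • (A ^ a * B ^ b) ∈ AddSubmonoid.closure (resolventTerms A B w m n) := by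
  induction k with
  | zero =>
    intro a b e hak hab hb
    obtain rfl : a = 2 * m := hak
    exact smul_pow_two_mul_mul_pow_mem_closure_resolventTerms hc hb hab
  | succ k ih =>
    intro a b e hak hab hb
    rcases b with _ | b
    · rw [pow_zero, mul_one]
      exact smul_pow_mem_closure_resolventTerms (by omega)
    · rw [pow_mul_pow_succ_eq hc hB, smul_add, smul_smul, ← pow_succ]
      exact add_mem (ih (a + 1) b e (by omega) (by omega) (by omega))
        (ih (a + 1) (b + 1) (e + 1) (by omega) (by omega) hb)

theorem pow_succ_mem_closure_resolventTerms (hc : Commute A B) (hB : B = A + w • (A * B))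
    (m n : ℕ) : B ^ (n + 1) ∈ AddSubmonoid.closure (resolventTerms A B w m n) := by
  simpa using smul_pow_mul_pow_mem_closure_resolventTerms (w := w) (m := m) (n := n) hc hB
    (2 * m) 0 (n + 1) 0 (by omega) (by omega) le_rfl

end Expansion

theorem stmt14_general {𝓗 : Type*} [NormedAddCommGroup 𝓗] [InnerProductSpace ℂ 𝓗]
    (D : Submodule ℂ 𝓗)
    (H : D →ₗ[ℂ] 𝓗)
    (R : ℂ → 𝓗 →L[ℂ] 𝓗)
    (hres : ∀ z : ℂ, 0 < z.im → IsResolventAt D H z (R z)) :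
    ∀ (z : ℂ), 0 < z.im → ∀ (m : ℕ), 1 ≤ m → ∀ (n : ℕ),
      (R z) ^ (n + 1) ∈ AddSubmonoid.closure
        {T : 𝓗 →L[ℂ] 𝓗 |
          (∃ β : ℕ, T = (z - Complex.I) ^ β • (R Complex.I) ^ (n + 1 + β)) ∨
          (∃ ν : ℕ, max 1 (n + 1 - 2 * m) ≤ ν ∧ ν ≤ n + 1 ∧
            T = (z - Complex.I) ^ (2 * m + ν - (n + 1)) •
              ((R Complex.I) ^ m * (R z) ^ ν * (R Complex.I) ^ m))} := by
  intro z hz m _ n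
  have hRz := hres z hz
  have hRi := hres Complex.I (by simp)
  have hB : R z = R Complex.I + (z - Complex.I) • (R Complex.I * R z) :=
    eq_add_of_sub_eq' (hRz.sub_eq_smul_mul hRi)
  exact pow_succ_mem_closure_resolventTerms (hRz.commute hRi) hB m n

/-- Let `H` be maximal dissipative with resolvent `R(z)` for `Im z > 0`.
For every `m ≥ 1` and `n`, `R(z)^{n+1}` is a finite sum of terms of the form
`(z-i)^β R(i)^{n+1+β}` with `β ∈ ℕ`, or `(z-i)^{2m-n-1+ν} R(i)^m R(z)^ν R(i)^m`
with `max(1, n+1-2m) ≤ ν ≤ n+1`. -/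
theorem stmt14 {𝓗 : Type*} [NormedAddCommGroup 𝓗] [InnerProductSpace ℂ 𝓗] [CompleteSpace 𝓗]
    (D : Submodule ℂ 𝓗) (hdense : Dense (D : Set 𝓗))
    (H : D →ₗ[ℂ] 𝓗)
    (hdiss : ∀ φ : D, (inner ℂ (H φ) (φ : 𝓗) : ℂ).im ≤ 0)
    (R : ℂ → 𝓗 →L[ℂ] 𝓗)
    (hres : ∀ z : ℂ, 0 < z.im → IsResolventAt D H z (R z)) :
    ∀ (z : ℂ), 0 < z.im → ∀ (m : ℕ), 1 ≤ m → ∀ (n : ℕ),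
      (R z) ^ (n + 1) ∈ AddSubmonoid.closure
        {T : 𝓗 →L[ℂ] 𝓗 |
          (∃ β : ℕ, T = (z - Complex.I) ^ β • (R Complex.I) ^ (n + 1 + β)) ∨
          (∃ ν : ℕ, max 1 (n + 1 - 2 * m) ≤ ν ∧ ν ≤ n + 1 ∧
            T = (z - Complex.I) ^ (2 * m + ν - (n + 1)) •
              ((R Complex.I) ^ m * (R z) ^ ν * (R Complex.I) ^ m))} :=
  stmt14_general D H R hres
end
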